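/- arXiv:2212.06633 — 2 statements merged into one kernel-verified Lean document; each statement's English description precedes it below -/
import Mathlib

section
/- Define the stationary holding cost 𝒥_h(θ) := Σ_{z=1}^S d^θ(z)·h(z) for θ ∈ {1,…,S+1}. If the holding cost h : {1,…,S} → ℝ is nondecreasing, then the map θ ↦ 𝒥_h(θ) is nondecreasing on {1,…,S+1}. -/
open Finset

/-- β_{θ,ρ} = 1/(θ-1+1/ρ) -/
noncomputable def bet (ρ : ℝ) (θ : ℕ) : ℝ := 1 / ((θ : ℝ) - 1 + 1 / ρ)

/-- Stationary distribution d^θ on {1,…,S} under the threshold policy θ;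
for θ = S+1 it is the point mass at S. -/
noncomputable def dstat (S : ℕ) (ρ : ℝ) (θ : ℕ) (z : ℕ) : ℝ :=
  if θ = S + 1 then (if z = S then 1 else 0)
  else if z < θ then bet ρ θ
  else if z < S then (1 - ρ) ^ (z - θ) * bet ρ θ
  else (1 - ρ) ^ (S - θ) * bet ρ θ / ρ

/-- Stationary holding cost 𝒥_h(θ) = Σ_{z=1}^S d^θ(z)h(z). -/
noncomputable def Jhold (S : ℕ) (ρ : ℝ) (h : ℕ → ℝ) (θ : ℕ) : ℝ :=
  ∑ z ∈ Finset.Icc 1 S, dstat S ρ θ z * h z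

lemma bet_den_pos (ρ : ℝ) (hρ0 : 0 < ρ) (θ : ℕ) (h1 : 1 ≤ θ) :
    0 < (θ : ℝ) - 1 + 1 / ρ := by
  have h1' : (1:ℝ) ≤ θ := by exact_mod_cast h1
  have := one_div_pos.mpr hρ0
  linarith

lemma bet_pos (ρ : ℝ) (hρ0 : 0 < ρ) (θ : ℕ) (h1 : 1 ≤ θ) : 0 < bet ρ θ :=
  one_div_pos.mpr (bet_den_pos ρ hρ0 θ h1)

lemma bet_anti (ρ : ℝ) (hρ0 : 0 < ρ) (θ : ℕ) (h1 : 1 ≤ θ) :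
    bet ρ (θ + 1) ≤ bet ρ θ := by
  have hd := bet_den_pos ρ hρ0 θ h1
  apply one_div_le_one_div_of_le hd
  push_cast; linarith

lemma bet_step (ρ : ℝ) (hρ0 : 0 < ρ) (hρ1 : ρ ≤ 1) (θ : ℕ) (h1 : 1 ≤ θ) :
    (1 - ρ) * bet ρ θ ≤ bet ρ (θ + 1) := by
  have hd := bet_den_pos ρ hρ0 θ h1
  have hd' := bet_den_pos ρ hρ0 (θ+1) (by omega)
  unfold bet
  rw [mul_one_div, div_le_div_iff₀ hd hd']
  push_cast
  have h1' : (1:ℝ) ≤ θ := by exact_mod_cast h1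
  have hinv : ρ * (1 / ρ) = 1 := by field_simp
  nlinarith

lemma dstat_nonneg (S : ℕ) (ρ : ℝ) (hρ0 : 0 < ρ) (hρ1 : ρ ≤ 1) (θ : ℕ)
    (h1 : 1 ≤ θ) (z : ℕ) : 0 ≤ dstat S ρ θ z := by
  have hb := (bet_pos ρ hρ0 θ h1).le
  have hpow : ∀ n : ℕ, (0:ℝ) ≤ (1 - ρ) ^ n := fun n => pow_nonneg (by linarith) n
  unfold dstat
  split_ifs with h2 h3 h4 h5
  · exact zero_le_one
  · exact le_refl 0
  · exact hb
  · exact mul_nonneg (hpow _) hb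
  · exact div_nonneg (mul_nonneg (hpow _) hb) hρ0.le

lemma sum_dstat_one (S : ℕ) (hS : 2 ≤ S) (ρ : ℝ) (hρ0 : 0 < ρ) (θ : ℕ)
    (h1 : 1 ≤ θ) (h2 : θ ≤ S) :
    ∑ z ∈ Finset.Icc 1 S, dstat S ρ θ z = 1 := by
  have hθne : θ ≠ S + 1 := by omega
  have hd := bet_den_pos ρ hρ0 θ h1
  have hx1 : (1:ℝ) - ρ ≠ 1 := by intro hh; linarith
  rw [show Finset.Icc 1 S = Finset.Ico 1 (S+1) by rw [Finset.Ico_add_one_right_eq_Icc]]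
  rw [← Finset.sum_Ico_consecutive _ (by omega : 1 ≤ θ) (by omega : θ ≤ S+1)]
  rw [← Finset.sum_Ico_consecutive _ (by omega : θ ≤ S) (by omega : S ≤ S+1)]
  have hA : ∑ z ∈ Finset.Ico 1 θ, dstat S ρ θ z = ((θ:ℝ) - 1) * bet ρ θ := by
    rw [Finset.sum_congr rfl (fun z hz => ?_), Finset.sum_const, Nat.card_Ico,
      nsmul_eq_mul, Nat.cast_sub h1, Nat.cast_one]
    · rw [Finset.mem_Ico] at hz
      simp [dstat, hθne, hz.2]
  have hB : ∑ z ∈ Finset.Ico θ S, dstat S ρ θ z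
      = ((1 - ρ) ^ (S - θ) - 1) / (-ρ) * bet ρ θ := by
    rw [Finset.sum_Ico_eq_sum_range]
    rw [Finset.sum_congr rfl (fun i hi => ?_), ← Finset.sum_mul,
      geom_sum_eq hx1, show (1:ℝ) - ρ - 1 = -ρ by ring]
    · rw [Finset.mem_range] at hi
      have hz1 : ¬ (θ + i < θ) := by omega
      have hz2 : θ + i < S := by omega
      simp [dstat, hθne, hz1, hz2]
  have hC : ∑ z ∈ Finset.Ico S (S+1), dstat S ρ θ z
      = (1 - ρ) ^ (S - θ) * bet ρ θ / ρ := by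
    rw [show Finset.Ico S (S+1) = {S} by rw [Nat.Ico_succ_singleton],
      Finset.sum_singleton]
    have hz1 : ¬ (S < θ) := by omega
    simp [dstat, hθne, hz1]
  rw [hA, hB, hC]
  have hbet : ((θ:ℝ) - 1 + 1 / ρ) * bet ρ θ = 1 := by
    unfold bet; rw [mul_one_div, div_self hd.ne']
  have hneg : ((1 - ρ) ^ (S - θ) - 1) / (-ρ) = (1 - (1 - ρ) ^ (S - θ)) / ρ := by
    rw [div_neg, ← neg_div]; congr 1; ring
  rw [hneg]
  have hcomb : ((θ:ℝ) - 1) * bet ρ θ + (1 - (1 - ρ) ^ (S - θ)) / ρ * bet ρ θ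
      + (1 - ρ) ^ (S - θ) * bet ρ θ / ρ = ((θ:ℝ) - 1 + 1 / ρ) * bet ρ θ := by
    field_simp
    ring
  linarith [hcomb, hbet]

lemma Jhold_top (S : ℕ) (hS : 2 ≤ S) (ρ : ℝ) (h : ℕ → ℝ) :
    Jhold S ρ h (S + 1) = h S := by
  unfold Jhold
  have hc : ∀ z ∈ Finset.Icc 1 S, dstat S ρ (S+1) z * h z
      = if z = S then h z else 0 := by
    intro z _
    unfold dstat
    simp only [if_pos rfl]
    split_ifs <;> ring
  rw [Finset.sum_congr rfl hc, Finset.sum_ite_eq' (Finset.Icc 1 S) S h]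
  simp [Finset.mem_Icc]
  omega

lemma Jhold_step (S : ℕ) (hS : 2 ≤ S) (ρ : ℝ) (hρ0 : 0 < ρ) (hρ1 : ρ ≤ 1)
    (h : ℕ → ℝ)
    (hmono : ∀ a ∈ Finset.Icc 1 S, ∀ b ∈ Finset.Icc 1 S, a ≤ b → h a ≤ h b)
    (θ : ℕ) (h1 : 1 ≤ θ) (h2 : θ ≤ S) :
    Jhold S ρ h θ ≤ Jhold S ρ h (θ + 1) := by
  have hsum1 := sum_dstat_one S hS ρ hρ0 θ h1 h2
  rcases eq_or_lt_of_le h2 with hθS | hθS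
  · -- θ = S : Jhold S ≤ h S = Jhold (S+1)
    subst hθS
    rw [Jhold_top θ hS ρ h]
    unfold Jhold
    calc ∑ z ∈ Finset.Icc 1 θ, dstat θ ρ θ z * h z
        ≤ ∑ z ∈ Finset.Icc 1 θ, dstat θ ρ θ z * h θ := by
          apply Finset.sum_le_sum
          intro z hz
          have hz' := Finset.mem_Icc.mp hz
          exact mul_le_mul_of_nonneg_left
            (hmono z hz θ (Finset.mem_Icc.mpr ⟨h1, le_rfl⟩) hz'.2)
            (dstat_nonneg θ ρ hρ0 hρ1 θ h1 z)
      _ = h θ := by rw [← Finset.sum_mul, hsum1, one_mul]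
  · -- θ + 1 ≤ S
    have hθ1S : θ + 1 ≤ S := hθS
    have hne : θ ≠ S + 1 := by omega
    have hne' : θ + 1 ≠ S + 1 := by omega
    have hsum2 := sum_dstat_one S hS ρ hρ0 (θ+1) (by omega) hθ1S
    have hθmem : θ ∈ Finset.Icc 1 S := Finset.mem_Icc.mpr ⟨h1, h2⟩
    have key : ∀ z ∈ Finset.Icc 1 S,
        0 ≤ (dstat S ρ (θ+1) z - dstat S ρ θ z) * (h z - h θ) := by
      intro z hz
      have hz' := Finset.mem_Icc.mp hz
      rcases le_or_gt z θ with hzθ | hzθ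
      · have hd' : dstat S ρ (θ+1) z = bet ρ (θ+1) := by
          simp [dstat, hne', show z < θ + 1 by omega, show θ ≠ S by omega]
        have hdz : dstat S ρ θ z = bet ρ θ := by
          rcases lt_or_eq_of_le hzθ with hlt | heq
          · simp [dstat, hne, hlt]
          · subst heq
            simp [dstat, hne, show ¬ (z < z) from lt_irrefl z,
              show z < S by omega]
        have hb := bet_anti ρ hρ0 θ h1
        have hh := hmono z hz θ hθmem hzθ
        rw [hd', hdz]
        nlinarith
      · -- z ≥ θ + 1
        have hrel : (1-ρ)^(z-θ) * bet ρ θ ≤ (1-ρ)^(z-(θ+1)) * bet ρ (θ+1) := by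
          rw [show z - θ = (z - (θ+1)) + 1 by omega, pow_succ]
          calc (1-ρ)^(z-(θ+1)) * (1-ρ) * bet ρ θ
              = (1-ρ)^(z-(θ+1)) * ((1-ρ) * bet ρ θ) := by ring
            _ ≤ (1-ρ)^(z-(θ+1)) * bet ρ (θ+1) :=
              mul_le_mul_of_nonneg_left (bet_step ρ hρ0 hρ1 θ h1)
                (pow_nonneg (by linarith) _)
        have hdd : dstat S ρ θ z ≤ dstat S ρ (θ+1) z := by
          rcases lt_or_eq_of_le hz'.2 with hzS | hzS
          · have e1 : dstat S ρ θ z = (1-ρ)^(z-θ) * bet ρ θ := by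
              simp [dstat, hne, show ¬ z < θ by omega, hzS]
            have e2 : dstat S ρ (θ+1) z = (1-ρ)^(z-(θ+1)) * bet ρ (θ+1) := by
              simp [dstat, hne', show ¬ z < θ + 1 by omega, hzS, show θ ≠ S by omega]
            rw [e1, e2]; exact hrel
          · have e1 : dstat S ρ θ z = (1-ρ)^(S-θ) * bet ρ θ / ρ := by
              simp [dstat, hne, show ¬ z < θ by omega, show ¬ z < S by omega]
            have e2 : dstat S ρ (θ+1) z = (1-ρ)^(S-(θ+1)) * bet ρ (θ+1) / ρ := by
              simp [dstat, hne', show ¬ z < θ + 1 by omega, show ¬ z < S by omega, show θ ≠ S by omega]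
            rw [hzS] at hrel
            rw [e1, e2]
            exact div_le_div_of_nonneg_right hrel hρ0.le
        have hh : h θ ≤ h z := hmono θ hθmem z hz (by omega)
        exact mul_nonneg (by linarith) (by linarith)
    have expand : Jhold S ρ h (θ+1) - Jhold S ρ h θ
        = (∑ z ∈ Finset.Icc 1 S,
            (dstat S ρ (θ+1) z - dstat S ρ θ z) * (h z - h θ))
          + h θ * (∑ z ∈ Finset.Icc 1 S, dstat S ρ (θ+1) z)
          - h θ * (∑ z ∈ Finset.Icc 1 S, dstat S ρ θ z) := by
      unfold Jhold
      simp only [Finset.mul_sum]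
      rw [← Finset.sum_sub_distrib, ← Finset.sum_add_distrib, ← Finset.sum_sub_distrib]
      exact Finset.sum_congr rfl (fun z _ => by ring)
    rw [hsum1, hsum2] at expand
    have hnn := Finset.sum_nonneg key
    linarith

/-- if h is nondecreasing, θ ↦ 𝒥_h(θ) is nondecreasing on {1,…,S+1}. -/
theorem Jhold_monotone
    (S : ℕ) (hS : 2 ≤ S) (ρ : ℝ) (hρ0 : 0 < ρ) (hρ1 : ρ ≤ 1)
    (h : ℕ → ℝ)
    (hmono : ∀ a ∈ Finset.Icc 1 S, ∀ b ∈ Finset.Icc 1 S, a ≤ b → h a ≤ h b) :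
    ∀ θ ∈ Finset.Icc 1 (S + 1), ∀ θ' ∈ Finset.Icc 1 (S + 1),
      θ ≤ θ' → Jhold S ρ h θ ≤ Jhold S ρ h θ' := by
  intro θ hθ θ' hθ' hle
  rw [Finset.mem_Icc] at hθ
  revert hθ'
  induction θ', hle using Nat.le_induction with
  | base => intro _; exact le_rfl
  | succ n hn ih =>
    intro hθ'
    rw [Finset.mem_Icc] at hθ'
    have h1n : 1 ≤ n := le_trans hθ.1 hn
    have hnS : n ≤ S := by omega
    exact le_trans (ih (Finset.mem_Icc.mpr ⟨h1n, by omega⟩))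
      (Jhold_step S hS ρ hρ0 hρ1 h hmono n h1n hnS)
end

section
/- (Optimality at a coincident point.) Assume h is nondecreasing. If θ ∈ {1,…,S} and λ ∈ ℝ satisfy J(θ,λ) = J(θ+1,λ), then both θ and θ+1 are global minimizers: J(θ,λ) ≤ J(ξ,λ) for every ξ ∈ {1,…,S+1}. -/
open Finset

/-- Average cost J(θ,λ) = Σ_z d^θ(z)h(z) + (λ+τ)·Σ_{z=θ}^S d^θ(z). -/
noncomputable def Jcost (S : ℕ) (ρ : ℝ) (h : ℕ → ℝ) (τ : ℝ) (θ : ℕ) (lam : ℝ) : ℝ :=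
  (∑ z ∈ Finset.Icc 1 S, dstat S ρ θ z * h z)
    + (lam + τ) * ∑ z ∈ Finset.Icc θ S, dstat S ρ θ z

noncomputable def Afun (S : ℕ) (ρ : ℝ) (h : ℕ → ℝ) (θ : ℕ) : ℝ :=
  (∑ z ∈ Icc 1 (θ-1), h z) + (∑ z ∈ Icc θ (S-1), (1-ρ)^(z-θ) * h z)
    + (1-ρ)^(S-θ) * h S / ρ

noncomputable def Dfun (S : ℕ) (ρ : ℝ) (h : ℕ → ℝ) (θ : ℕ) : ℝ :=
  ρ * (∑ z ∈ Icc (θ+1) (S-1), (1-ρ)^(z-(θ+1)) * h z) + (1-ρ)^(S-(θ+1)) * h S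

theorem geomIcc (ρ : ℝ) (hρ0 : 0 < ρ) (a b : ℕ) :
    ∑ z ∈ Icc a b, (1-ρ)^(z-a) = (1-(1-ρ)^(b+1-a))/ρ := by
  have hρ : ρ ≠ 0 := ne_of_gt hρ0
  have : Icc a b = Ico a (b+1) := by rw [Finset.Ico_add_one_right_eq_Icc]
  rw [this, Finset.sum_Ico_eq_sum_range]
  have h1 : ∀ i : ℕ, (a+i) - a = i := fun i => by omega
  simp_rw [h1]
  rw [geom_sum_eq (by intro hx; linarith)]
  field_simp
  rw [show (1 - ρ - 1) = -ρ by ring, div_neg, mul_div_cancel_left₀ _ hρ]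
  ring

theorem sum_Icc_bot (f : ℕ → ℝ) (a b : ℕ) (hab : a ≤ b) :
    ∑ z ∈ Icc a b, f z = f a + ∑ z ∈ Icc (a+1) b, f z := by
  rw [Finset.Icc_eq_cons_Ioc hab, Finset.sum_cons, Finset.Icc_add_one_left_eq_Ioc]

theorem mpos (ρ : ℝ) (hρ0 : 0 < ρ) (hρ1 : ρ ≤ 1) (θ : ℕ) (hθ1 : 1 ≤ θ) :
    0 < (θ : ℝ) - 1 + 1/ρ := by
  have h1 : (1:ℝ) ≤ (θ:ℝ) := by exact_mod_cast hθ1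
  have : 0 < 1/ρ := by positivity
  linarith

theorem bet_mul (ρ : ℝ) (hρ0 : 0 < ρ) (hρ1 : ρ ≤ 1) (θ : ℕ) (hθ1 : 1 ≤ θ) :
    ((θ : ℝ) - 1 + 1/ρ) * bet ρ θ = 1 := by
  have hm := mpos ρ hρ0 hρ1 θ hθ1
  rw [bet, mul_one_div, div_self (ne_of_gt hm)]

-- tail sum
theorem tail_sum (S : ℕ) (ρ : ℝ) (hρ0 : 0 < ρ) (θ : ℕ) (hθ1 : 1 ≤ θ) (hθS : θ ≤ S) :
    ∑ z ∈ Icc θ S, dstat S ρ θ z = bet ρ θ / ρ := by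
  have hρ : ρ ≠ 0 := ne_of_gt hρ0
  have hne : ¬ (θ = S + 1) := by omega
  obtain ⟨c, rfl⟩ : ∃ c, S = c + 1 := ⟨S-1, by omega⟩
  rw [Finset.sum_Icc_succ_top hθS]
  have h1 : ∀ z ∈ Icc θ c, dstat (c+1) ρ θ z = (1-ρ)^(z-θ) * bet ρ θ := by
    intro z hz
    simp only [Finset.mem_Icc] at hz
    rw [dstat, if_neg hne, if_neg (by omega), if_pos (by omega)]
  rw [Finset.sum_congr rfl h1]
  have h2 : dstat (c+1) ρ θ (c+1) = (1-ρ)^(c+1-θ) * bet ρ θ / ρ := by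
    rw [dstat, if_neg hne, if_neg (by omega), if_neg (by omega)]
  rw [h2]
  have h3 : ∑ z ∈ Icc θ c, (1-ρ)^(z-θ) * bet ρ θ = ((1-(1-ρ)^(c+1-θ))/ρ) * bet ρ θ := by
    rw [← Finset.sum_mul, geomIcc ρ hρ0]
  rw [h3]
  field_simp
  ring

theorem Jcost_eq (S : ℕ) (ρ : ℝ) (hρ0 : 0 < ρ) (h : ℕ → ℝ) (τ : ℝ)
    (θ : ℕ) (hθ1 : 1 ≤ θ) (hθS : θ ≤ S) (lam : ℝ) :
    Jcost S ρ h τ θ lam = bet ρ θ * (Afun S ρ h θ + (lam+τ)/ρ) := by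
  have hρ : ρ ≠ 0 := ne_of_gt hρ0
  have hne : ¬ (θ = S + 1) := by omega
  rw [Jcost, tail_sum S ρ hρ0 θ hθ1 hθS]
  have e0 : Icc 1 S = Ico 1 (S+1) := by rw [Finset.Ico_add_one_right_eq_Icc]
  rw [e0, ← Finset.sum_Ico_consecutive _ (by omega : 1 ≤ θ) (by omega : θ ≤ S+1)]
  have e1 : ∑ z ∈ Ico 1 θ, dstat S ρ θ z * h z = ∑ z ∈ Icc 1 (θ-1), bet ρ θ * h z := by
    have : Ico 1 θ = Icc 1 (θ-1) := by
      rw [← Finset.Ico_add_one_right_eq_Icc]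
      congr 1
      omega
    rw [this]
    apply Finset.sum_congr rfl
    intro z hz
    simp only [Finset.mem_Icc] at hz
    rw [dstat, if_neg hne, if_pos (by omega)]
  have e2 : ∑ z ∈ Ico θ (S+1), dstat S ρ θ z * h z
      = (∑ z ∈ Icc θ (S-1), (1-ρ)^(z-θ) * bet ρ θ * h z) + (1-ρ)^(S-θ) * bet ρ θ / ρ * h S := by
    obtain ⟨c, rfl⟩ : ∃ c, S = c + 1 := ⟨S-1, by omega⟩
    rw [Finset.Ico_add_one_right_eq_Icc, Finset.sum_Icc_succ_top hθS]
    congr 1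
    · apply Finset.sum_congr (by simp)
      intro z hz
      simp only [Finset.mem_Icc] at hz
      rw [dstat, if_neg hne, if_neg (by omega), if_pos (by omega)]
    · rw [dstat, if_neg hne, if_neg (by omega), if_neg (by omega)]
  rw [e1, e2, Afun]
  simp only [mul_add, Finset.mul_sum]
  have r1 : ∀ z ∈ Icc 1 (θ-1), bet ρ θ * h z = bet ρ θ * h z := fun _ _ => rfl
  have r2 : ∀ z ∈ Icc θ (S-1), (1-ρ)^(z-θ) * bet ρ θ * h z = bet ρ θ * ((1-ρ)^(z-θ) * h z) := by
    intro z _; ring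
  rw [Finset.sum_congr rfl r2]
  ring

theorem Jcost_top (S : ℕ) (hS : 1 ≤ S) (ρ : ℝ) (h : ℕ → ℝ) (τ : ℝ) (lam : ℝ) :
    Jcost S ρ h τ (S+1) lam = h S := by
  rw [Jcost]
  have e1 : ∑ z ∈ Finset.Icc (S+1) S, dstat S ρ (S+1) z = 0 := by
    rw [Finset.Icc_eq_empty (by omega)]
    simp
  rw [e1, mul_zero, add_zero]
  have e2 : ∀ z ∈ Icc 1 S, dstat S ρ (S+1) z * h z = (if z = S then h S else 0) := by
    intro z hz
    rw [dstat, if_pos rfl]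
    by_cases hzS : z = S
    · simp [hzS]
    · simp [hzS]
  rw [Finset.sum_congr rfl e2, Finset.sum_ite_eq' (Icc 1 S) S (fun _ => h S)]
  rw [if_pos (by simp; omega)]

theorem A_rec (S : ℕ) (ρ : ℝ) (hρ0 : 0 < ρ) (h : ℕ → ℝ) (θ : ℕ) (hθ1 : 1 ≤ θ)
    (hθS : θ + 1 ≤ S) :
    Afun S ρ h (θ+1) = Afun S ρ h θ + Dfun S ρ h θ := by
  have hρ : ρ ≠ 0 := ne_of_gt hρ0
  have f1 : ∑ z ∈ Icc 1 θ, h z = (∑ z ∈ Icc 1 (θ-1), h z) + h θ := by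
    obtain ⟨t, rfl⟩ : ∃ t, θ = t + 1 := ⟨θ-1, by omega⟩
    rw [Finset.sum_Icc_succ_top (by omega)]
    simp
  have f2 : ∑ z ∈ Icc θ (S-1), (1-ρ)^(z-θ) * h z
      = h θ + ∑ z ∈ Icc (θ+1) (S-1), (1-ρ)^(z-θ) * h z := by
    rw [sum_Icc_bot _ _ _ (by omega)]
    simp
  have f3 : ∀ z ∈ Icc (θ+1) (S-1), (1-ρ)^(z-θ) * h z = (1-ρ) * ((1-ρ)^(z-(θ+1)) * h z) := by
    intro z hz
    simp only [Finset.mem_Icc] at hz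
    have : z - θ = (z - (θ+1)) + 1 := by omega
    rw [this, pow_succ]
    ring
  have f3' : ∑ z ∈ Icc (θ+1) (S-1), (1-ρ)^(z-θ) * h z
      = (1-ρ) * ∑ z ∈ Icc (θ+1) (S-1), (1-ρ)^(z-(θ+1)) * h z := by
    rw [Finset.sum_congr rfl f3, Finset.mul_sum]
  have f4 : (1-ρ)^(S-θ) = (1-ρ)^(S-(θ+1)) * (1-ρ) := by
    have : S - θ = (S - (θ+1)) + 1 := by omega
    rw [this, pow_succ]
  rw [Afun, Afun, Dfun]
  have hθm : θ + 1 - 1 = θ := by omega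
  rw [hθm, f1, f2, f3', f4]
  field_simp
  ring

theorem D_rec (S : ℕ) (ρ : ℝ) (h : ℕ → ℝ) (θ : ℕ) (hθS : θ + 2 ≤ S) :
    Dfun S ρ h θ = ρ * h (θ+1) + (1-ρ) * Dfun S ρ h (θ+1) := by
  have f2 : ∑ z ∈ Icc (θ+1) (S-1), (1-ρ)^(z-(θ+1)) * h z
      = h (θ+1) + ∑ z ∈ Icc (θ+2) (S-1), (1-ρ)^(z-(θ+1)) * h z := by
    rw [sum_Icc_bot _ _ _ (by omega)]
    simp
  have f3 : ∀ z ∈ Icc (θ+2) (S-1), (1-ρ)^(z-(θ+1)) * h z = (1-ρ) * ((1-ρ)^(z-(θ+2)) * h z) := by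
    intro z hz
    simp only [Finset.mem_Icc] at hz
    have : z - (θ+1) = (z - (θ+2)) + 1 := by omega
    rw [this, pow_succ]
    ring
  have f3' : ∑ z ∈ Icc (θ+2) (S-1), (1-ρ)^(z-(θ+1)) * h z
      = (1-ρ) * ∑ z ∈ Icc (θ+2) (S-1), (1-ρ)^(z-(θ+2)) * h z := by
    rw [Finset.sum_congr rfl f3, Finset.mul_sum]
  have f4 : (1-ρ)^(S-(θ+1)) = (1-ρ) * (1-ρ)^(S-(θ+2)) := by
    have : S - (θ+1) = (S - (θ+2)) + 1 := by omega
    rw [this, pow_succ]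
    ring
  rw [Dfun, Dfun, f2, f3', f4]
  have he : θ + 1 + 1 = θ + 2 := by omega
  rw [he]
  ring

theorem Wlem (S : ℕ) (ρ : ℝ) (hρ0 : 0 < ρ) (θ : ℕ) (hθS : θ + 1 ≤ S) :
    ρ * (∑ z ∈ Icc (θ+1) (S-1), (1-ρ)^(z-(θ+1))) + (1-ρ)^(S-(θ+1)) = 1 := by
  have hρ : ρ ≠ 0 := ne_of_gt hρ0
  rw [geomIcc ρ hρ0]
  have e : S-1+1-(θ+1) = S-(θ+1) := by omega
  rw [e]
  field_simp
  ring

theorem D_le (S : ℕ) (ρ : ℝ) (hρ0 : 0 < ρ) (hρ1 : ρ ≤ 1) (h : ℕ → ℝ)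
    (hmono : ∀ a ∈ Finset.Icc 1 S, ∀ b ∈ Finset.Icc 1 S, a ≤ b → h a ≤ h b)
    (θ : ℕ) (hθS : θ + 1 ≤ S) :
    Dfun S ρ h θ ≤ h S := by
  have hq : (0:ℝ) ≤ 1-ρ := by linarith
  have hw := Wlem S ρ hρ0 θ hθS
  have hb : ∀ z ∈ Icc (θ+1) (S-1), (1-ρ)^(z-(θ+1)) * h z ≤ (1-ρ)^(z-(θ+1)) * h S := by
    intro z hz
    simp only [Finset.mem_Icc] at hz
    exact mul_le_mul_of_nonneg_left
      (hmono z (Finset.mem_Icc.mpr ⟨by omega, by omega⟩) S (Finset.mem_Icc.mpr ⟨by omega, le_refl S⟩) (by omega))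
      (pow_nonneg hq _)
  calc Dfun S ρ h θ
      ≤ ρ * (∑ z ∈ Icc (θ+1) (S-1), (1-ρ)^(z-(θ+1)) * h S) + (1-ρ)^(S-(θ+1)) * h S :=
        add_le_add (mul_le_mul_of_nonneg_left (Finset.sum_le_sum hb) (le_of_lt hρ0)) (le_refl _)
    _ = h S := by
        rw [← Finset.sum_mul]
        linear_combination (h S) * hw

theorem D_ge (S : ℕ) (ρ : ℝ) (hρ0 : 0 < ρ) (hρ1 : ρ ≤ 1) (h : ℕ → ℝ)
    (hmono : ∀ a ∈ Finset.Icc 1 S, ∀ b ∈ Finset.Icc 1 S, a ≤ b → h a ≤ h b)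
    (θ : ℕ) (hθS : θ + 1 ≤ S) :
    h (θ+1) ≤ Dfun S ρ h θ := by
  have hq : (0:ℝ) ≤ 1-ρ := by linarith
  have hw := Wlem S ρ hρ0 θ hθS
  have hb : ∀ z ∈ Icc (θ+1) (S-1), (1-ρ)^(z-(θ+1)) * h (θ+1) ≤ (1-ρ)^(z-(θ+1)) * h z := by
    intro z hz
    simp only [Finset.mem_Icc] at hz
    exact mul_le_mul_of_nonneg_left
      (hmono (θ+1) (Finset.mem_Icc.mpr ⟨by omega, by omega⟩) z (Finset.mem_Icc.mpr ⟨by omega, by omega⟩) (by omega))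
      (pow_nonneg hq _)
  calc h (θ+1)
      = ρ * (∑ z ∈ Icc (θ+1) (S-1), (1-ρ)^(z-(θ+1)) * h (θ+1)) + (1-ρ)^(S-(θ+1)) * h (θ+1) := by
        rw [← Finset.sum_mul]
        linear_combination (-(h (θ+1))) * hw
    _ ≤ Dfun S ρ h θ :=
        add_le_add (mul_le_mul_of_nonneg_left (Finset.sum_le_sum hb) (le_of_lt hρ0))
          (mul_le_mul_of_nonneg_left
            (hmono (θ+1) (Finset.mem_Icc.mpr ⟨by omega, by omega⟩) S (Finset.mem_Icc.mpr ⟨by omega, le_refl S⟩) (by omega))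
            (pow_nonneg hq _))

theorem D_mono (S : ℕ) (ρ : ℝ) (hρ0 : 0 < ρ) (hρ1 : ρ ≤ 1) (h : ℕ → ℝ)
    (hmono : ∀ a ∈ Finset.Icc 1 S, ∀ b ∈ Finset.Icc 1 S, a ≤ b → h a ≤ h b)
    (a : ℕ) (ha : 1 ≤ a) : ∀ b, a ≤ b → b + 1 ≤ S → Dfun S ρ h a ≤ Dfun S ρ h b := by
  intro b
  induction b with
  | zero => omega
  | succ n ih =>
    intro hab hbS
    rcases Nat.lt_or_ge a (n+1) with hlt | hge
    · have h1 : Dfun S ρ h a ≤ Dfun S ρ h n := ih (by omega) (by omega)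
      have h2 : Dfun S ρ h n ≤ Dfun S ρ h (n+1) := by
        have hrec := D_rec S ρ h n (by omega)
        have hge2 := D_ge S ρ hρ0 hρ1 h hmono (n+1) (by omega)
        have hm : h (n+1) ≤ h (n+1+1) :=
          hmono (n+1) (Finset.mem_Icc.mpr ⟨by omega, by omega⟩) (n+1+1) (Finset.mem_Icc.mpr ⟨by omega, by omega⟩) (by omega)
        nlinarith [hρ0]
      linarith
    · have : a = n+1 := by omega
      subst this
      exact le_refl _

theorem Jm (S : ℕ) (ρ : ℝ) (hρ0 : 0 < ρ) (hρ1 : ρ ≤ 1) (h : ℕ → ℝ) (τ : ℝ)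
    (θ : ℕ) (hθ1 : 1 ≤ θ) (hθS : θ ≤ S) (lam : ℝ) :
    ((θ : ℝ) - 1 + 1/ρ) * Jcost S ρ h τ θ lam = Afun S ρ h θ + (lam+τ)/ρ := by
  rw [Jcost_eq S ρ hρ0 h τ θ hθ1 hθS lam, ← mul_assoc, bet_mul ρ hρ0 hρ1 θ hθ1, one_mul]

theorem Jrec (S : ℕ) (ρ : ℝ) (hρ0 : 0 < ρ) (hρ1 : ρ ≤ 1) (h : ℕ → ℝ) (τ : ℝ)
    (θ : ℕ) (hθ1 : 1 ≤ θ) (hθS : θ + 1 ≤ S) (lam : ℝ) :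
    ((θ : ℝ) + 1/ρ) * Jcost S ρ h τ (θ+1) lam
      = ((θ : ℝ) - 1 + 1/ρ) * Jcost S ρ h τ θ lam + Dfun S ρ h θ := by
  have h1 := Jm S ρ hρ0 hρ1 h τ θ hθ1 (by omega) lam
  have h2 := Jm S ρ hρ0 hρ1 h τ (θ+1) (by omega) hθS lam
  have hA := A_rec S ρ hρ0 h θ hθ1 hθS
  push_cast at h2
  linarith

theorem down_lemma (S : ℕ) (ρ : ℝ) (hρ0 : 0 < ρ) (hρ1 : ρ ≤ 1) (h : ℕ → ℝ) (τ : ℝ)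
    (ξ : ℕ) (hξ1 : 1 ≤ ξ) (hξS : ξ + 1 ≤ S) (lam V : ℝ)
    (h1 : V ≤ Jcost S ρ h τ (ξ+1) lam) (h2 : Dfun S ρ h ξ ≤ V) :
    V ≤ Jcost S ρ h τ ξ lam := by
  have hrec := Jrec S ρ hρ0 hρ1 h τ ξ hξ1 hξS lam
  have hm := mpos ρ hρ0 hρ1 ξ hξ1
  have key : ((ξ : ℝ) - 1 + 1/ρ) * V ≤ ((ξ : ℝ) - 1 + 1/ρ) * Jcost S ρ h τ ξ lam := by
    have := mul_le_mul_of_nonneg_left h1 (by linarith : (0:ℝ) ≤ (ξ : ℝ) + 1/ρ)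
    linarith
  exact le_of_mul_le_mul_left key hm

theorem up_lemma (S : ℕ) (ρ : ℝ) (hρ0 : 0 < ρ) (hρ1 : ρ ≤ 1) (h : ℕ → ℝ) (τ : ℝ)
    (ξ : ℕ) (hξ1 : 1 ≤ ξ) (hξS : ξ + 1 ≤ S) (lam V : ℝ)
    (h1 : V ≤ Jcost S ρ h τ ξ lam) (h2 : V ≤ Dfun S ρ h ξ) :
    V ≤ Jcost S ρ h τ (ξ+1) lam := by
  have hrec := Jrec S ρ hρ0 hρ1 h τ ξ hξ1 hξS lam
  have hm := mpos ρ hρ0 hρ1 ξ hξ1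
  have key : ((ξ : ℝ) + 1/ρ) * V ≤ ((ξ : ℝ) + 1/ρ) * Jcost S ρ h τ (ξ+1) lam := by
    have := mul_le_mul_of_nonneg_left h1 (le_of_lt hm)
    linarith
  exact le_of_mul_le_mul_left key (by linarith)

/-- Optimality at a coincident point: if J(θ,λ) = J(θ+1,λ)
then both θ and θ+1 minimize J(·,λ) over {1,…,S+1}. -/
theorem coincident_point_optimal
    (S : ℕ) (hS : 2 ≤ S) (ρ : ℝ) (hρ0 : 0 < ρ) (hρ1 : ρ ≤ 1)
    (h : ℕ → ℝ)
    (hmono : ∀ a ∈ Finset.Icc 1 S, ∀ b ∈ Finset.Icc 1 S, a ≤ b → h a ≤ h b)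
    (τ : ℝ) (θ : ℕ) (hθ : θ ∈ Finset.Icc 1 S) (lam : ℝ)
    (hcoin : Jcost S ρ h τ θ lam = Jcost S ρ h τ (θ + 1) lam) :
    (∀ ξ ∈ Finset.Icc 1 (S + 1), Jcost S ρ h τ θ lam ≤ Jcost S ρ h τ ξ lam) ∧
    (∀ ξ ∈ Finset.Icc 1 (S + 1), Jcost S ρ h τ (θ + 1) lam ≤ Jcost S ρ h τ ξ lam) := by
  simp only [Finset.mem_Icc] at hθ
  obtain ⟨hθ1, hθS⟩ := hθ
  set V := Jcost S ρ h τ θ lam with hV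
  -- establish the three key facts
  have key : (∀ ξ, 1 ≤ ξ → ξ < θ → Dfun S ρ h ξ ≤ V) ∧
      (∀ ξ, θ ≤ ξ → ξ + 1 ≤ S → V ≤ Dfun S ρ h ξ) ∧ (V ≤ h S) := by
    by_cases hcS : θ + 1 ≤ S
    · have hrec := Jrec S ρ hρ0 hρ1 h τ θ hθ1 hcS lam
      rw [← hcoin, ← hV] at hrec
      have hVD : Dfun S ρ h θ = V := by linarith
      refine ⟨?_, ?_, ?_⟩
      · intro ξ hξ1 hξθ
        have := D_mono S ρ hρ0 hρ1 h hmono ξ hξ1 θ (by omega) hcS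
        linarith
      · intro ξ hξθ hξS
        have := D_mono S ρ hρ0 hρ1 h hmono θ hθ1 ξ hξθ hξS
        linarith
      · have := D_le S ρ hρ0 hρ1 h hmono θ hcS
        linarith
    · have hθeq : θ = S := by omega
      have hVhS : V = h S := by
        rw [hcoin, hθeq, Jcost_top S (by omega) ρ h τ lam]
      refine ⟨?_, ?_, by linarith⟩
      · intro ξ hξ1 hξθ
        have := D_le S ρ hρ0 hρ1 h hmono ξ (by omega)
        linarith
      · intro ξ hξθ hξS
        omega
  obtain ⟨HD_le, HD_ge, HhS⟩ := key
  have down : ∀ k, k ≤ θ - 1 → V ≤ Jcost S ρ h τ (θ - k) lam := by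
    intro k
    induction k with
    | zero =>
      intro _
      simp only [Nat.sub_zero]
      exact le_refl V
    | succ n ih =>
      intro hk
      have hξ1 : 1 ≤ θ - (n+1) := by omega
      have heq : θ - (n+1) + 1 = θ - n := by omega
      apply down_lemma S ρ hρ0 hρ1 h τ (θ - (n+1)) hξ1 (by omega) lam V _
        (HD_le _ hξ1 (by omega))
      rw [heq]
      exact ih (by omega)
  have up : ∀ ξ, θ + 1 ≤ ξ → ξ ≤ S → V ≤ Jcost S ρ h τ ξ lam := by
    intro ξ
    induction ξ with
    | zero => omega
    | succ n ih =>
      intro h1 h2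
      rcases Nat.lt_or_ge (θ+1) (n+1) with hlt | hge
      · exact up_lemma S ρ hρ0 hρ1 h τ n (by omega) (by omega) lam V
          (ih (by omega) (by omega)) (HD_ge n (by omega) (by omega))
      · have he : n + 1 = θ + 1 := by omega
        rw [he, ← hcoin]
  have main : ∀ ξ ∈ Finset.Icc 1 (S + 1), V ≤ Jcost S ρ h τ ξ lam := by
    intro ξ hξ
    simp only [Finset.mem_Icc] at hξ
    rcases Nat.lt_or_ge θ ξ with hgt | hle
    · rcases Nat.lt_or_ge S ξ with hgt2 | hle2
      · have he : ξ = S + 1 := by omega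
        rw [he, Jcost_top S (by omega) ρ h τ lam]
        exact HhS
      · exact up ξ (by omega) hle2
    · have := down (θ - ξ) (by omega)
      rw [show θ - (θ - ξ) = ξ by omega] at this
      exact this
  exact ⟨main, fun ξ hξ => by rw [← hcoin]; exact main ξ hξ⟩
end
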